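/- arXiv:1308.6770 — 4 statements merged into one kernel-verified Lean document; each statement's English description precedes it below -/
import Mathlib

section
/- Let K be a field, R := K[X,Y]/⟨XY, X², Y²⟩ with x, y the images of X, Y, let E : R → R be the K-derivation with E(x) = y and E(y) = 0, and let χ : R → K be the K-algebra homomorphism with χ(x) = χ(y) = 0. Then there is no element c ∈ R such that E(r) = c · (r − χ(r)·1) for all r ∈ R. -/
open MvPolynomial in
/-- The ideal ⟨X·Y, X², Y²⟩ in K[X,Y]. -/
noncomputable def paperIdeal (K : Type*) [Field K] : Ideal (MvPolynomial (Fin 2) K) :=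
  Ideal.span {X 0 * X 1, X 0 ^ 2, X 1 ^ 2}

/-- R = K[X,Y]/⟨XY, X², Y²⟩. -/
abbrev paperR (K : Type*) [Field K] : Type _ :=
  MvPolynomial (Fin 2) K ⧸ paperIdeal K

/-- x, the image of X in R. -/
noncomputable def paperX (K : Type*) [Field K] : paperR K :=
  Ideal.Quotient.mk (paperIdeal K) (MvPolynomial.X 0)

/-- y, the image of Y in R. -/
noncomputable def paperY (K : Type*) [Field K] : paperR K :=
  Ideal.Quotient.mk (paperIdeal K) (MvPolynomial.X 1)

/-- Auxiliary algebra map K[X,Y] → TrivSqZeroExt K (K×K). -/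
noncomputable def auxAeval (K : Type*) [Field K] :
    MvPolynomial (Fin 2) K →ₐ[K] TrivSqZeroExt K (K × K) :=
  MvPolynomial.aeval ![TrivSqZeroExt.inr (1, 0), TrivSqZeroExt.inr (0, 1)]

theorem auxKer (K : Type*) [Field K] :
    paperIdeal K ≤ RingHom.ker (auxAeval K).toRingHom := by
  rw [paperIdeal, Ideal.span_le]
  rintro p (rfl | rfl | rfl) <;>
    simp [auxAeval, RingHom.mem_ker, pow_two, TrivSqZeroExt.inr_mul_inr]

/-- The induced map R → TrivSqZeroExt K (K×K). -/
noncomputable def auxPhi (K : Type*) [Field K] :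
    paperR K →+* TrivSqZeroExt K (K × K) :=
  Ideal.Quotient.lift (paperIdeal K) (auxAeval K).toRingHom (fun _ ha => auxKer K ha)

set_option synthInstance.maxHeartbeats 1000000 in
/-- There is no c ∈ R such that E(r) = c · (r − χ(r)·1) for all r ∈ R. -/
theorem stmt5 (K : Type*) [Field K]
    (E : Derivation K (paperR K) (paperR K))
    (hEx : E (paperX K) = paperY K) (hEy : E (paperY K) = 0)
    (χ : paperR K →ₐ[K] K) (hχx : χ (paperX K) = 0) (hχy : χ (paperY K) = 0) :
    ¬ ∃ c : paperR K, ∀ r : paperR K,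
        E r = c * (r - algebraMap K (paperR K) (χ r)) := by
  rintro ⟨c, hc⟩
  have h1 : paperY K = c * paperX K := by
    have := hc (paperX K)
    rwa [hEx, hχx, map_zero, sub_zero] at this
  have h2 := congrArg (auxPhi K) h1
  have hx : auxPhi K (paperX K) = TrivSqZeroExt.inr (1, 0) := by
    simp [auxPhi, paperX, auxAeval]
  have hy : auxPhi K (paperY K) = TrivSqZeroExt.inr (0, 1) := by
    simp [auxPhi, paperY, auxAeval]
  rw [map_mul, hx, hy] at h2
  have h3 := congrArg TrivSqZeroExt.snd h2
  simp [TrivSqZeroExt.snd_mul] at h3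
end

section
/- Let K be a field and let A be the quotient of the free (noncommutative) K-algebra on three generators a, x, y by the two-sided ideal generated by the elements a·x − y, a·y, x·a, y·a, x², y², x·y, y·x. Then the family consisting of the images of the powers aⁿ (n ∈ ℕ, with a⁰ = 1) together with the images of x and y is a basis of A as a K-vector space. -/
/-- The set of generators a·x − y, a·y, x·a, y·a, x², y², x·y, y·x of the two-sided ideal,
where a, x, y are the three generators of the free algebra. -/
noncomputable def paperGens (K : Type*) [Field K] : Set (FreeAlgebra K (Fin 3)) :=
  letI a := FreeAlgebra.ι K (0 : Fin 3)
  letI x := FreeAlgebra.ι K (1 : Fin 3)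
  letI y := FreeAlgebra.ι K (2 : Fin 3)
  {a * x - y, a * y, x * a, y * a, x ^ 2, y ^ 2, x * y, y * x}

/-- The relation identifying each ideal generator with 0, so that `RingQuot` of it is the
quotient of the free algebra by the two-sided ideal generated by `paperGens K`. -/
def paperRel (K : Type*) [Field K] :
    FreeAlgebra K (Fin 3) → FreeAlgebra K (Fin 3) → Prop :=
  fun p q => p ∈ paperGens K ∧ q = 0

/-- A = K⟨a,x,y⟩ / ⟨a·x − y, a·y, x·a, y·a, x², y², x·y, y·x⟩. -/
abbrev paperA (K : Type*) [Field K] : Type _ := RingQuot (paperRel K)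

/-- The quotient map onto A. -/
noncomputable def paperMk (K : Type*) [Field K] : FreeAlgebra K (Fin 3) →ₐ[K] paperA K :=
  RingQuot.mkAlgHom K (paperRel K)

/-!
The family spans `A`: the span of `1 = a⁰, a, a², …, x, y` contains the generators and is
closed under multiplication, because the relations reduce every product of two of these elements
to one of them or to `0` (e.g. `aᵐ x` is `x`, `y` or `0`). For linear independence, let `A` act
on the vector space with basis `eₙ (n ∈ ℕ), e_x, e_y` the way it should act on itself by left
multiplication: `a` shifts `eₙ ↦ eₙ₊₁` and `e_x ↦ e_y ↦ 0`, while `x` and `y` send `e₀` to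
`e_x`, resp. `e_y`, and kill the other basis vectors. These operators satisfy the defining
relations, and the orbit map `u ↦ u • e₀` sends the family to the basis `eₙ, e_x, e_y`.
-/

open FreeAlgebra (ι)
open Finsupp

theorem Submodule.mul_mem_span_of_forall_mul_mem {R S : Type*} [CommSemiring R] [Semiring S]
    [Algebra R S] {s : Set S}
    (hs : ∀ u ∈ s, ∀ v ∈ s, u * v ∈ span R s) {u v : S} (hu : u ∈ span R s)
    (hv : v ∈ span R s) : u * v ∈ span R s := by
  have hmul : span R s * span R s ≤ span R s := by
    rw [span_mul_span, span_le]
    exact Set.mul_subset_iff.mpr hs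
  exact hmul (mul_mem_mul hu hv)

namespace paperA

variable (K : Type*) [Field K]

noncomputable def a : paperA K := paperMk K (ι K 0)
noncomputable def x : paperA K := paperMk K (ι K 1)
noncomputable def y : paperA K := paperMk K (ι K 2)

variable {K}

theorem paperMk_eq_zero_of_mem_paperGens {u : FreeAlgebra K (Fin 3)} (hu : u ∈ paperGens K) :
    paperMk K u = 0 :=
  (RingQuot.mkAlgHom_rel K (s := paperRel K) ⟨hu, rfl⟩).trans (map_zero _)

theorem a_mul_x : a K * x K = y K := by
  rw [← sub_eq_zero, a, x, y, ← map_mul, ← map_sub]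
  exact paperMk_eq_zero_of_mem_paperGens (by simp [paperGens])

theorem a_mul_y : a K * y K = 0 := by
  rw [a, y, ← map_mul]
  exact paperMk_eq_zero_of_mem_paperGens (by simp [paperGens])

theorem x_mul_a : x K * a K = 0 := by
  rw [x, a, ← map_mul]
  exact paperMk_eq_zero_of_mem_paperGens (by simp [paperGens])

theorem y_mul_a : y K * a K = 0 := by
  rw [y, a, ← map_mul]
  exact paperMk_eq_zero_of_mem_paperGens (by simp [paperGens])

theorem x_mul_x : x K * x K = 0 := by
  rw [x, ← map_mul, ← pow_two]
  exact paperMk_eq_zero_of_mem_paperGens (by simp [paperGens])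

theorem y_mul_y : y K * y K = 0 := by
  rw [y, ← map_mul, ← pow_two]
  exact paperMk_eq_zero_of_mem_paperGens (by simp [paperGens])

theorem x_mul_y : x K * y K = 0 := by
  rw [x, y, ← map_mul]
  exact paperMk_eq_zero_of_mem_paperGens (by simp [paperGens])

theorem y_mul_x : y K * x K = 0 := by
  rw [y, x, ← map_mul]
  exact paperMk_eq_zero_of_mem_paperGens (by simp [paperGens])

theorem a_pow_add_two_mul_x (n : ℕ) : a K ^ (n + 2) * x K = 0 := by
  rw [pow_succ, mul_assoc, a_mul_x, pow_succ, mul_assoc, a_mul_y, mul_zero]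

theorem a_pow_succ_mul_y (n : ℕ) : a K ^ (n + 1) * y K = 0 := by
  rw [pow_succ, mul_assoc, a_mul_y, mul_zero]

theorem x_mul_a_pow_succ (n : ℕ) : x K * a K ^ (n + 1) = 0 := by
  rw [pow_succ', ← mul_assoc, x_mul_a, zero_mul]

theorem y_mul_a_pow_succ (n : ℕ) : y K * a K ^ (n + 1) = 0 := by
  rw [pow_succ', ← mul_assoc, y_mul_a, zero_mul]

variable (K)

noncomputable def basisFamily : ℕ ⊕ Fin 2 → paperA K := Sum.elim (a K ^ ·) ![x K, y K]

variable {K}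

theorem basisFamily_mul_mem_span (i j : ℕ ⊕ Fin 2) :
    basisFamily K i * basisFamily K j ∈ Submodule.span K (Set.range (basisFamily K)) := by
  set S := Submodule.span K (Set.range (basisFamily K))
  have mem (k : ℕ ⊕ Fin 2) : basisFamily K k ∈ S := Submodule.subset_span (Set.mem_range_self k)
  rcases i with m | i <;> rcases j with n | j
  · simpa [basisFamily, pow_add] using mem (.inl (m + n))
  · fin_cases j <;> rcases m with _ | _ | m
    all_goals
      simp [basisFamily, a_mul_x, a_mul_y, a_pow_add_two_mul_x, a_pow_succ_mul_y, S.zero_mem]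
    exacts [mem (.inr 0), mem (.inr 1), mem (.inr 1)]
  · fin_cases i <;> rcases n with _ | n
    all_goals simp [basisFamily, x_mul_a_pow_succ, y_mul_a_pow_succ, S.zero_mem]
    exacts [mem (.inr 0), mem (.inr 1)]
  · fin_cases i <;> fin_cases j <;>
      simp [basisFamily, x_mul_x, x_mul_y, y_mul_x, y_mul_y, S.zero_mem]

theorem span_basisFamily_eq_top : Submodule.span K (Set.range (basisFamily K)) = ⊤ := by
  set S := Submodule.span K (Set.range (basisFamily K))
  have mem (k : ℕ ⊕ Fin 2) : basisFamily K k ∈ S := Submodule.subset_span (Set.mem_range_self k)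
  have mul_mem {u v : paperA K} : u ∈ S → v ∈ S → u * v ∈ S :=
    Submodule.mul_mem_span_of_forall_mul_mem (by
      rintro _ ⟨i, rfl⟩ _ ⟨j, rfl⟩
      exact basisFamily_mul_mem_span i j)
  rw [eq_top_iff]
  rintro u -
  obtain ⟨w, rfl⟩ := RingQuot.mkAlgHom_surjective K (paperRel K) u
  induction w using FreeAlgebra.induction with
  | grade0 r =>
    rw [AlgHom.commutes, Algebra.algebraMap_eq_smul_one]
    exact S.smul_mem r (by simpa [basisFamily] using mem (.inl 0))
  | grade1 i =>
    fin_cases i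
    · simpa [basisFamily, a, paperMk] using mem (.inl 1)
    · exact mem (.inr 0)
    · exact mem (.inr 1)
  | mul u v hu hv => rw [map_mul]; exact mul_mem hu hv
  | add u v hu hv => rw [map_add]; exact S.add_mem hu hv

variable (K)

noncomputable def regA : Module.End K (ℕ ⊕ Fin 2 →₀ K) :=
  linearCombination K (Sum.elim (fun n => single (.inl (n + 1)) 1) ![single (.inr 1) 1, 0])

noncomputable def regX : Module.End K (ℕ ⊕ Fin 2 →₀ K) := lsingle (.inr 0) ∘ₗ lapply (.inl 0)

noncomputable def regY : Module.End K (ℕ ⊕ Fin 2 →₀ K) := lsingle (.inr 1) ∘ₗ lapply (.inl 0)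

theorem lift_reg_eq_zero_of_mem_paperGens {u : FreeAlgebra K (Fin 3)}
    (hu : u ∈ paperGens K) :
    FreeAlgebra.lift K ![regA K, regX K, regY K] u = 0 := by
  simp only [paperGens, Set.mem_insert_iff, Set.mem_singleton_iff] at hu
  rcases hu with rfl | rfl | rfl | rfl | rfl | rfl | rfl | rfl <;>
  · ext i j
    rcases i with (_ | n) | i
    all_goals try fin_cases i
    all_goals simp [regA, regX, regY, pow_two]

noncomputable def regularRep : paperA K →ₐ[K] Module.End K (ℕ ⊕ Fin 2 →₀ K) :=
  RingQuot.liftAlgHom K ⟨FreeAlgebra.lift K ![regA K, regX K, regY K], by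
    rintro u _ ⟨hu, rfl⟩
    rw [lift_reg_eq_zero_of_mem_paperGens K hu, map_zero]⟩

variable {K}

theorem regularRep_paperMk_ι (i : Fin 3) :
    regularRep K (paperMk K (ι K i)) = ![regA K, regX K, regY K] i := by
  simp [regularRep, paperMk, RingQuot.liftAlgHom_mkAlgHom_apply]

theorem regA_pow_apply_single_zero (n : ℕ) :
    (regA K ^ n) (single (.inl 0) 1) = single (.inl n) 1 := by
  induction n with
  | zero => rfl
  | succ n ih => rw [pow_succ', Module.End.mul_apply, ih]; simp [regA]

theorem regularRep_basisFamily_apply (i : ℕ ⊕ Fin 2) :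
    regularRep K (basisFamily K i) (single (.inl 0) 1) = single i 1 := by
  rcases i with n | i
  · simp [basisFamily, a, regularRep_paperMk_ι, regA_pow_apply_single_zero]
  · fin_cases i <;> simp [basisFamily, x, y, regularRep_paperMk_ι, regX, regY]

theorem linearIndependent_basisFamily : LinearIndependent K (basisFamily K) := by
  refine LinearIndependent.of_comp
    (LinearMap.applyₗ (single (.inl 0) 1) ∘ₗ (regularRep K).toLinearMap) ?_
  convert Finsupp.linearIndependent_single_one (R := K) (ι := ℕ ⊕ Fin 2)
  exact regularRep_basisFamily_apply _

end paperA

/-- The images of the powers aⁿ (n ∈ ℕ) together with the images of x and y form a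
K-vector space basis of A. -/
theorem stmt7 (K : Type*) [Field K] :
    ∃ b : Module.Basis (ℕ ⊕ Fin 2) K (paperA K),
      (∀ n : ℕ, b (Sum.inl n) = paperMk K (FreeAlgebra.ι K (0 : Fin 3)) ^ n) ∧
      b (Sum.inr 0) = paperMk K (FreeAlgebra.ι K (1 : Fin 3)) ∧
      b (Sum.inr 1) = paperMk K (FreeAlgebra.ι K (2 : Fin 3)) := by
  refine ⟨.mk paperA.linearIndependent_basisFamily paperA.span_basisFamily_eq_top.ge,
    fun n => ?_, ?_, ?_⟩ <;>
  exact Module.Basis.mk_apply _ _ _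
end

section
/- Let K be a field and let A be the quotient of the free K-algebra on three generators a, x, y by the two-sided ideal generated by a·x − y, a·y, x·a, y·a, x², y², x·y, y·x. Then there is no element z ∈ A such that x · z = y in A. -/
/-!
Sending a, x, y to the matrix units E₀₁, E₁₂, E₀₂ of `Matrix (Fin 3) (Fin 3) K` kills every
relation (E₀₁E₁₂ = E₀₂, and all the other products vanish), so it defines a representation of A.
Every matrix E₁₂M has zero row 0, whereas E₀₂ does not, so already the image of x·z = y has no
solution.
-/

theorem Matrix.single_mul_ne_single {n α : Type*} [Fintype n] [DecidableEq n] [Semiring α]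
    {i k : n} (hki : k ≠ i) (j l : n) (c : α) {d : α} (hd : d ≠ 0) (M : Matrix n n α) :
    Matrix.single i j c * M ≠ Matrix.single k l d := fun h => by
  have hkl := congrFun (congrFun h k) l
  rw [Matrix.single_mul_apply_of_ne _ _ _ _ _ hki, Matrix.single_apply_same] at hkl
  exact hd hkl.symm

namespace paperA

variable (K : Type*) [Field K]

noncomputable def freeMatrixRep : FreeAlgebra K (Fin 3) →ₐ[K] Matrix (Fin 3) (Fin 3) K :=
  FreeAlgebra.lift K ![Matrix.single 0 1 1, Matrix.single 1 2 1, Matrix.single 0 2 1]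

theorem freeMatrixRep_eq_of_paperRel {p q : FreeAlgebra K (Fin 3)} (h : paperRel K p q) :
    freeMatrixRep K p = freeMatrixRep K q := by
  obtain ⟨hp, rfl⟩ := h
  simp only [paperGens, Set.mem_insert_iff, Set.mem_singleton_iff] at hp
  rcases hp with rfl | rfl | rfl | rfl | rfl | rfl | rfl | rfl <;>
    simp [freeMatrixRep, pow_two, Matrix.single_mul_single_same, Matrix.single_mul_single_of_ne]

noncomputable def matrixRep : paperA K →ₐ[K] Matrix (Fin 3) (Fin 3) K :=
  RingQuot.liftAlgHom K ⟨freeMatrixRep K, fun _ _ => freeMatrixRep_eq_of_paperRel K⟩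

@[simp]
theorem matrixRep_mk (p : FreeAlgebra K (Fin 3)) :
    matrixRep K (paperMk K p) = freeMatrixRep K p :=
  RingQuot.liftAlgHom_mkAlgHom_apply K _ _ p

end paperA

/-- There is no z ∈ A with x · z = y. -/
theorem stmt8 (K : Type*) [Field K] :
    ¬ ∃ z : paperA K,
        paperMk K (FreeAlgebra.ι K (1 : Fin 3)) * z
          = paperMk K (FreeAlgebra.ι K (2 : Fin 3)) := by
  rintro ⟨z, hz⟩
  have h := congrArg (paperA.matrixRep K) hz
  simp only [map_mul, paperA.matrixRep_mk, paperA.freeMatrixRep, FreeAlgebra.lift_ι_apply] at h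
  exact Matrix.single_mul_ne_single (i := (1 : Fin 3)) (k := 0) (by decide) 2 2 1 one_ne_zero _ h
end

section
/- Let K be a field and let A be the quotient of the free K-algebra on three generators a, x, y by the two-sided ideal generated by a·x − y, a·y, x·a, y·a, x², y², x·y, y·x. Then there is no K-algebra antihomomorphism S : A → A (equivalently, no K-algebra homomorphism S : A → Aᵐᵒᵖ into the opposite algebra) satisfying S(x) = x and S(y) = y. -/
open Matrix

noncomputable def paperFreeRepr (K : Type*) [Field K] :
    FreeAlgebra K (Fin 3) →ₐ[K] Matrix (Fin 3) (Fin 3) K :=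
  FreeAlgebra.lift K ![single 0 1 1, single 1 2 1, single 0 2 1]

lemma paperFreeRepr_eq_of_paperRel (K : Type*) [Field K] {p q : FreeAlgebra K (Fin 3)}
    (h : paperRel K p q) : paperFreeRepr K p = paperFreeRepr K q := by
  obtain ⟨hp, rfl⟩ := h
  simp only [paperGens, Set.mem_insert_iff, Set.mem_singleton_iff] at hp
  rcases hp with rfl | rfl | rfl | rfl | rfl | rfl | rfl | rfl <;>
    simp [paperFreeRepr, pow_two]

noncomputable def paperRepr (K : Type*) [Field K] :
    paperA K →ₐ[K] Matrix (Fin 3) (Fin 3) K :=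
  RingQuot.liftAlgHom K ⟨paperFreeRepr K, fun _ _ h => paperFreeRepr_eq_of_paperRel K h⟩

@[simp]
lemma paperRepr_paperMk (K : Type*) [Field K] (p : FreeAlgebra K (Fin 3)) :
    paperRepr K (paperMk K p) = paperFreeRepr K p :=
  RingQuot.liftAlgHom_mkAlgHom_apply K _ _ p

lemma paperMk_a_mul_x (K : Type*) [Field K] :
    paperMk K (FreeAlgebra.ι K 0) * paperMk K (FreeAlgebra.ι K 1) =
      paperMk K (FreeAlgebra.ι K 2) := by
  rw [← map_mul, ← sub_eq_zero, ← map_sub, ← map_zero (paperMk K)]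
  exact RingQuot.mkAlgHom_rel K ⟨by simp [paperGens], rfl⟩

lemma paperMk_x_mul_ne_y (K : Type*) [Field K] (b : paperA K) :
    paperMk K (FreeAlgebra.ι K 1) * b ≠ paperMk K (FreeAlgebra.ι K 2) := fun h => by
  simpa [paperFreeRepr] using congrArg (paperRepr K · 0 2) h

/-- There is no K-algebra antihomomorphism S : A → A (i.e. K-algebra homomorphism
A → Aᵐᵒᵖ) with S(x) = x and S(y) = y. -/
theorem stmt9 (K : Type*) [Field K] :
    ¬ ∃ S : paperA K →ₐ[K] (paperA K)ᵐᵒᵖ,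
        S (paperMk K (FreeAlgebra.ι K (1 : Fin 3)))
            = MulOpposite.op (paperMk K (FreeAlgebra.ι K (1 : Fin 3))) ∧
        S (paperMk K (FreeAlgebra.ι K (2 : Fin 3)))
            = MulOpposite.op (paperMk K (FreeAlgebra.ι K (2 : Fin 3))) := by
  rintro ⟨S, hx, hy⟩
  apply paperMk_x_mul_ne_y K (S (paperMk K (FreeAlgebra.ι K 0))).unop
  apply MulOpposite.op_injective
  rw [MulOpposite.op_mul, MulOpposite.op_unop, ← hx, ← hy, ← map_mul, paperMk_a_mul_x]
end
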